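/- Naive semantics violates SCOOC: in the six-cycle AF with arguments a, b, c, d, e, f and attacks a→b, b→c, c→d, d→e, e→f, f→a, the set {a, d} is a naive extension but is not strongly complete outside odd cycles (c and its only attacker b lie on no odd cycle, {a,d} contains no attacker of c, yet c ∉ {a,d}). -/

import Mathlib

/-- Six arguments a,b,c,d,e,f represented as `Fin 6` (a = 0, b = 1, ..., f = 5),
with the six-cycle attack relation a→b, b→c, c→d, d→e, e→f, f→a. -/
def att : Fin 6 → Fin 6 → Prop := fun i j => j = i + 1

def conflictFree (att : Fin 6 → Fin 6 → Prop) (S : Set (Fin 6)) : Prop :=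
  ∀ x ∈ S, ∀ y ∈ S, ¬ att x y

def naiveExt (att : Fin 6 → Fin 6 → Prop) (S : Set (Fin 6)) : Prop :=
  conflictFree att S ∧ ∀ T, conflictFree att T → S ⊆ T → T = S

def inOddCycle (att : Fin 6 → Fin 6 → Prop) (x : Fin 6) : Prop :=
  ∃ n : ℕ, Odd n ∧ ∃ p : ℕ → Fin 6, p 0 = x ∧ p n = x ∧
    (∀ i, i < n → att (p i) (p (i + 1))) ∧
    (∀ i j, i < j → j ≤ n → p i = p j → i = 0 ∧ j = n)

def scooc (att : Fin 6 → Fin 6 → Prop) (S : Set (Fin 6)) : Prop :=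
  ∀ x, ¬ inOddCycle att x → (∀ y, att y x → ¬ inOddCycle att y) →
    (∀ b ∈ S, ¬ att b x) → x ∈ S

open Fin.NatCast Fin.CommRing in
lemma no_odd_cycle (x : Fin 6) : ¬ inOddCycle att x := by
  rintro ⟨n, hodd, p, h0, hn, hstep, -⟩
  have key : ∀ i, i ≤ n → p i = x + (i : Fin 6) := by
    intro i hi
    induction i with
    | zero => simpa using h0
    | succ k ih =>
      have hk := ih (Nat.le_of_succ_le hi)
      have := hstep k (Nat.lt_of_succ_le hi)
      rw [this, hk]
      push_cast
      ring
  have := key n le_rfl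
  rw [hn] at this
  have h6 : (n : Fin 6) = 0 := by
    have := left_eq_add.mp this
    exact this
  have hdvd : (6 : ℕ) ∣ n := by
    rwa [Fin.natCast_eq_zero] at h6
  have : Even n := (even_iff_two_dvd).mpr (dvd_trans (by norm_num) hdvd)
  exact (Nat.not_even_iff_odd.mpr hodd) this

theorem naive_violates_SCOOC :
    naiveExt att ({0, 3} : Set (Fin 6)) ∧ ¬ scooc att ({0, 3} : Set (Fin 6)) := by
  constructor
  · constructor
    · intro x hx y hy
      rcases hx with rfl | rfl <;> rcases hy with rfl | rfl <;> simp [att]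
    · intro T hT hsub
      ext z
      simp only [Set.mem_insert_iff, Set.mem_singleton_iff]
      constructor
      · intro hz
        by_contra h
        push_neg at h
        have h0 : (0 : Fin 6) ∈ T := hsub (Or.inl rfl)
        have h3 : (3 : Fin 6) ∈ T := hsub (Or.inr rfl)
        fin_cases z
        · exact h.1 rfl
        · exact hT 0 h0 1 hz (by show att _ _; simp [att])
        · exact hT 2 hz 3 h3 (by show att _ _; simp [att])
        · exact h.2 rfl
        · exact hT 3 h3 4 hz (by show att _ _; simp [att])
        · exact hT 5 hz 0 h0 (by show att _ _; simp [att])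
      · rintro (rfl | rfl)
        · exact hsub (Or.inl rfl)
        · exact hsub (Or.inr rfl)
  · intro hs
    have := hs 2 (no_odd_cycle 2) (fun y _ => no_odd_cycle y)
      (by rintro b (rfl | rfl) <;> (show ¬ att _ _; simp [att]))
    simp at this
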